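/- arXiv:1108.6185 — 2 statements merged into one kernel-verified Lean document; each statement's English description precedes it below -/
import Mathlib

section
/- (Footprint bound, special case) Let F be a field, and let F(X_1,...,X_m) be a nonzero polynomial whose leading monomial with respect to a lexicographic ordering is X_1^{i_1}···X_m^{i_m} with i_j < s_j for all j. Then the number of zeros of F in S_1 × ... × S_m is at most s_1···s_m − (s_1−i_1)(s_2−i_2)···(s_m−i_m). -/
/-!
Expand `F` in the first variable: `F = ∑ₖ Gₖ(X₂, …, X_m) X₁ᵏ`. Because `X₁` is the most
significant variable of the lexicographic order, `F` has `X₁`-degree at most `i₁`, and the leading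
monomial of `G_{i₁}` is `X₂^{i₂} ⋯ X_m^{i_m}`. By induction `G_{i₁}` is nonzero at at least
`∏_{j ≥ 2} (s_j - i_j)` points `t` of `S₂ × ⋯ × S_m`; at each of them `F(·, t)` is a nonzero
univariate polynomial of degree at most `i₁`, so it is nonzero at at least `s₁ - i₁` points of
`S₁`. Hence `F` has at least `∏ (s_j - i_j)` non-zeros in `S₁ × ⋯ × S_m`.
-/

open Finset Classical

theorem Fin.card_filter_piFinset_eq_sum_card_filter_cons {n : ℕ} {α : Fin (n + 1) → Type*}
    (S : ∀ i, Finset (α i)) (P : (∀ i, α i) → Prop) [DecidablePred P] :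
    #{x ∈ Fintype.piFinset S | P x} =
      ∑ t ∈ Fintype.piFinset (Fin.tail S), #{a ∈ S 0 | P (Fin.cons a t)} := by
  have hpi := filter_piFinset_eq_map_consEquiv S (fun _ => True)
  simp only [filter_true] at hpi
  rw [hpi, filter_map, card_map, card_filter, sum_product_right]
  simp only [card_filter]
  rfl

namespace Finsupp

variable {N : Type*} [Zero N] {n : ℕ}

theorem toLex_cons_lt_toLex_cons_iff [LT N] {a b : N} {d e : Fin n →₀ N} :
    toLex (cons a d) < toLex (cons b e) ↔ a < b ∨ a = b ∧ toLex d < toLex e := by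
  simp only [Finsupp.Lex.lt_iff, ofLex_toLex]
  constructor
  · rintro ⟨i, hlt, hi⟩
    cases i using Fin.cases with
    | zero => exact Or.inl (by simpa using hi)
    | succ k =>
      refine Or.inr ⟨by simpa using hlt 0 k.succ_pos, k, fun j hj => ?_, by simpa using hi⟩
      simpa using hlt j.succ (Fin.succ_lt_succ_iff.mpr hj)
  · rintro (hab | ⟨rfl, k, hlt, hk⟩)
    · exact ⟨0, fun j hj => absurd hj (Fin.not_lt_zero j), by simpa using hab⟩
    · refine ⟨k.succ, fun j hj => ?_, by simpa using hk⟩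
      cases j using Fin.cases with
      | zero => simp
      | succ j => simpa using hlt j (Fin.succ_lt_succ_iff.mp hj)

theorem toLex_cons_le_toLex_cons_iff [PartialOrder N] {a b : N} {d e : Fin n →₀ N} :
    toLex (cons a d) ≤ toLex (cons b e) ↔ a < b ∨ a = b ∧ toLex d ≤ toLex e := by
  simp only [le_iff_eq_or_lt, toLex_cons_lt_toLex_cons_iff, toLex_inj, cons_injective2.eq_iff]
  tauto

end Finsupp

theorem Polynomial.card_sub_natDegree_le_card_filter_eval_ne_zero {R : Type*} [CommRing R]
    [IsDomain R] {p : Polynomial R} (hp : p ≠ 0) (s : Finset R) :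
    #s - p.natDegree ≤ #{a ∈ s | p.eval a ≠ 0} := by
  have hroots : #{a ∈ s | p.eval a = 0} ≤ p.natDegree :=
    card_le_degree_of_subset_roots fun a ha => by
      simpa [mem_roots hp] using (mem_filter.mp ha).2
  have := card_filter_add_card_filter_not (s := s) (p := fun a => p.eval a = 0)
  simp only [ne_eq]
  omega

namespace MvPolynomial

section CommSemiring

variable {R : Type*} [CommSemiring R] {n : ℕ} {F : MvPolynomial (Fin (n + 1)) R}
  {I : Fin (n + 1) →₀ ℕ}

theorem natDegree_finSuccEquiv_le_of_forall_toLex_le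
    (hlead : ∀ d ∈ F.support, toLex d ≤ toLex I) : (finSuccEquiv R n F).natDegree ≤ I 0 := by
  refine Polynomial.natDegree_le_iff_coeff_eq_zero.mpr fun k hk => ?_
  by_contra hcoeff
  obtain ⟨d, hd⟩ := ne_zero_iff.mp hcoeff
  rw [finSuccEquiv_coeff_coeff] at hd
  have := hlead _ (mem_support_iff.mpr hd)
  rw [← I.cons_tail, Finsupp.toLex_cons_le_toLex_cons_iff] at this
  omega

theorem toLex_le_tail_of_mem_support_coeff_finSuccEquiv
    (hlead : ∀ d ∈ F.support, toLex d ≤ toLex I) :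
    ∀ d ∈ ((finSuccEquiv R n F).coeff (I 0)).support, toLex d ≤ toLex I.tail := by
  intro d hd
  rw [mem_support_iff, finSuccEquiv_coeff_coeff] at hd
  have := hlead _ (mem_support_iff.mpr hd)
  rw [← I.cons_tail, Finsupp.toLex_cons_le_toLex_cons_iff] at this
  simpa using this

end CommSemiring

section Domain

variable {R : Type*} [CommRing R] [IsDomain R]

theorem card_sub_le_card_filter_eval_cons_ne_zero {n : ℕ} {F : MvPolynomial (Fin (n + 1)) R}
    {I : Fin (n + 1) →₀ ℕ} (hlead : ∀ d ∈ F.support, toLex d ≤ toLex I) {t : Fin n → R}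
    (ht : eval t ((finSuccEquiv R n F).coeff (I 0)) ≠ 0) (s : Finset R) :
    #s - I 0 ≤ #{a ∈ s | eval (Fin.cons a t) F ≠ 0} := by
  set p := (finSuccEquiv R n F).map (eval t)
  have hcoeff : p.coeff (I 0) ≠ 0 := by rwa [Polynomial.coeff_map]
  have hp : p ≠ 0 := fun h => hcoeff (by rw [h, Polynomial.coeff_zero])
  calc #s - I 0 ≤ #s - p.natDegree :=
        tsub_le_tsub_left (Polynomial.natDegree_map_le.trans
          (natDegree_finSuccEquiv_le_of_forall_toLex_le hlead)) _
    _ ≤ #{a ∈ s | p.eval a ≠ 0} := Polynomial.card_sub_natDegree_le_card_filter_eval_ne_zero hp s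
    _ = #{a ∈ s | eval (Fin.cons a t) F ≠ 0} := by simp only [p, eval_eq_eval_mv_eval']

theorem prod_card_sub_le_card_filter_eval_ne_zero {m : ℕ} (S : Fin m → Finset R)
    {F : MvPolynomial (Fin m) R} {I : Fin m →₀ ℕ} (hcoeff : F.coeff I ≠ 0)
    (hlead : ∀ d ∈ F.support, toLex d ≤ toLex I) :
    ∏ j, (#(S j) - I j) ≤ #{a ∈ Fintype.piFinset S | eval a F ≠ 0} := by
  induction m with
  | zero =>
    rw [Subsingleton.elim I 0] at hcoeff
    rw [F.eq_C_of_isEmpty]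
    simp [hcoeff]
  | succ n ih =>
    set G := (finSuccEquiv R n F).coeff (I 0)
    have hG : G.coeff I.tail ≠ 0 := by rwa [finSuccEquiv_coeff_coeff, I.cons_tail]
    calc ∏ j, (#(S j) - I j)
        = (#(S 0) - I 0) * ∏ j : Fin n, (#(Fin.tail S j) - I.tail j) := Fin.prod_univ_succ _
      _ ≤ (#(S 0) - I 0) * #{t ∈ Fintype.piFinset (Fin.tail S) | eval t G ≠ 0} :=
        Nat.mul_le_mul_left _
          (ih _ hG (toLex_le_tail_of_mem_support_coeff_finSuccEquiv hlead))
      _ = ∑ t ∈ Fintype.piFinset (Fin.tail S) with eval t G ≠ 0, (#(S 0) - I 0) := by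
        rw [sum_const, smul_eq_mul, mul_comm]
      _ ≤ ∑ t ∈ Fintype.piFinset (Fin.tail S) with eval t G ≠ 0,
            #{a ∈ S 0 | eval (Fin.cons a t) F ≠ 0} :=
        sum_le_sum fun t ht =>
          card_sub_le_card_filter_eval_cons_ne_zero hlead (mem_filter.mp ht).2 _
      _ ≤ ∑ t ∈ Fintype.piFinset (Fin.tail S), #{a ∈ S 0 | eval (Fin.cons a t) F ≠ 0} :=
        sum_le_sum_of_subset (filter_subset _ _)
      _ = #{a ∈ Fintype.piFinset S | eval a F ≠ 0} := by
        rw [Fin.card_filter_piFinset_eq_sum_card_filter_cons]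

end Domain

end MvPolynomial

theorem footprint_bound_general {m : ℕ} {K : Type*} [Field K]
    (S : Fin m → Finset K) (F : MvPolynomial (Fin m) K) (I : Fin m →₀ ℕ)
    (hcoeff : F.coeff I ≠ 0)
    (hlead : ∀ d ∈ F.support, toLex d ≤ toLex I) :
    ((Fintype.piFinset S).filter (fun a => MvPolynomial.eval a F = 0)).card
      ≤ ∏ j : Fin m, (S j).card - ∏ j : Fin m, ((S j).card - I j) := by
  have hnonzeros := MvPolynomial.prod_card_sub_le_card_filter_eval_ne_zero S hcoeff hlead
  have hsplit := card_filter_add_card_filter_not (s := Fintype.piFinset S)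
    (p := fun a => MvPolynomial.eval a F = 0)
  have hcard : (Fintype.piFinset S).card = ∏ j : Fin m, (S j).card := Fintype.card_piFinset S
  simp only [ne_eq] at hnonzeros
  omega

/-- Footprint bound, special case: if the leading monomial of a nonzero
polynomial `F` with respect to the lexicographic ordering is `X_1^{i_1}⋯X_m^{i_m}` with
`i_j < s_j` for all `j`, then the number of zeros of `F` in `S_1 × ⋯ × S_m` is at most
`s_1⋯s_m − (s_1−i_1)⋯(s_m−i_m)`. -/
theorem footprint_bound {m : ℕ} {K : Type*} [Field K]
    (S : Fin m → Finset K) (F : MvPolynomial (Fin m) K) (I : Fin m →₀ ℕ)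
    (hcoeff : F.coeff I ≠ 0)
    (hlead : ∀ d ∈ F.support, toLex d ≤ toLex I)
    (hI : ∀ j, I j < (S j).card) :
    ((Fintype.piFinset S).filter (fun a => MvPolynomial.eval a F = 0)).card
      ≤ ∏ j : Fin m, (S j).card - ∏ j : Fin m, ((S j).card - I j) :=
  footprint_bound_general S F I hcoeff hlead
end

section
/- Let F ∈ F[X_1,...,X_m], b_1,...,b_{m−1}, c ∈ F^m, and define F*(T_1,...,T_{m−1}) = F(T_1 b_1 + ... + T_{m−1} b_{m−1} + c). Then for any (t_1,...,t_{m−1}) ∈ F^{m−1}, mult(F*, (t_1,...,t_{m-1})) ≥ mult(F, t_1 b_1 + ... + t_{m−1} b_{m−1} + c). -/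
/-!
Taylor's formula identifies `eval a (mvHasseDeriv k F)` with the coefficient of `X^k` in
`F(X + a)`, so `multGE F a M` says that `F(X + a)` has no homogeneous component of degree `< M`.
With `a = ∑ t_j b_j + c` and the linear forms `ℓ_i = ∑ b_{j,i} T_j`, the shifted restriction is
`F*(T + t) = G(ℓ(T))` for `G = F(X + a)`; substituting linear forms preserves homogeneous
degrees, so `F*(T + t)` has no homogeneous component of degree `< M` either.
-/

open MvPolynomial

/-- The `k`-th Hasse derivative of a multivariate polynomial `F`: the coefficient of
`Z^k` in `F(X+Z)`, given by `F^{(k)} = ∑_d ∏_i C(d_i, k_i) · coeff_d(F) · X^{d−k}`. -/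
noncomputable def mvHasseDeriv {σ K : Type*} [CommRing K] [DecidableEq σ]
    (k : σ →₀ ℕ) (F : MvPolynomial σ K) : MvPolynomial σ K :=
  ∑ d ∈ F.support,
    MvPolynomial.monomial (d - k)
      ((∏ i ∈ k.support, Nat.choose (d i) (k i) : ℕ) • F.coeff d)

/-- `multGE F a M` means that the multiplicity of `F` at the point `a` is at least `M`,
i.e. all Hasse derivatives of order `< M` vanish at `a`. -/
def multGE {σ K : Type*} [CommRing K] [DecidableEq σ]
    (F : MvPolynomial σ K) (a : σ → K) (M : ℕ) : Prop :=
  ∀ k : σ →₀ ℕ, (k.sum fun _ n => n) < M → MvPolynomial.eval a (mvHasseDeriv k F) = 0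

/-- The multiplicity of `F` at `a`: the largest `M` such that all Hasse derivatives of
order `< M` vanish at `a` (junk value `0` for the zero polynomial, whose multiplicity
is infinite). -/
noncomputable def multAt {σ K : Type*} [CommRing K] [DecidableEq σ]
    (F : MvPolynomial σ K) (a : σ → K) : ℕ :=
  sSup {M | multGE F a M}

section HasseDeriv

variable {σ K : Type*} [CommRing K] [DecidableEq σ]

lemma mvHasseDeriv_eq_sum_of_support_subset (k : σ →₀ ℕ) (F : MvPolynomial σ K)
    {s : Finset (σ →₀ ℕ)} (hs : F.support ⊆ s) :
    mvHasseDeriv k F = ∑ d ∈ s,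
      monomial (d - k) ((∏ i ∈ k.support, Nat.choose (d i) (k i) : ℕ) • F.coeff d) :=
  Finset.sum_subset hs fun d _ hd => by simp [notMem_support_iff.mp hd]

lemma mvHasseDeriv_add (k : σ →₀ ℕ) (p q : MvPolynomial σ K) :
    mvHasseDeriv k (p + q) = mvHasseDeriv k p + mvHasseDeriv k q := by
  rw [mvHasseDeriv_eq_sum_of_support_subset k (p + q) support_add,
    mvHasseDeriv_eq_sum_of_support_subset k p Finset.subset_union_left,
    mvHasseDeriv_eq_sum_of_support_subset k q Finset.subset_union_right,
    ← Finset.sum_add_distrib]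
  simp only [coeff_add, smul_add, map_add]

lemma mvHasseDeriv_C (k : σ →₀ ℕ) (r : K) :
    mvHasseDeriv k (C r) = if k = 0 then C r else 0 := by
  rw [mvHasseDeriv_eq_sum_of_support_subset k _ (s := {0})
      (by rw [C_apply]; exact support_monomial_subset), Finset.sum_singleton]
  split_ifs with hk
  · simp [hk]
  · obtain ⟨j, hj⟩ := Finsupp.ne_iff.mp hk
    rw [Finset.prod_eq_zero (Finsupp.mem_support_iff.mpr hj)
      (Nat.choose_eq_zero_of_lt (Nat.pos_of_ne_zero hj)), zero_smul, map_zero]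

lemma le_of_prod_choose_ne_zero {d k : σ →₀ ℕ}
    (h : ∏ j ∈ k.support, (d j).choose (k j) ≠ 0) : k ≤ d := by
  intro j
  by_cases hj : j ∈ k.support
  · by_contra hlt
    exact h (Finset.prod_eq_zero hj (Nat.choose_eq_zero_of_lt (not_le.mp hlt)))
  · simp [Finsupp.notMem_support_iff.mp hj]

/-- Pascal's rule for the coefficients `∏ C(d_j, k_j)` of `mvHasseDeriv`. -/
lemma prod_choose_add_single (d k : σ →₀ ℕ) (i : σ) :
    ∏ j ∈ k.support, ((d + Finsupp.single i 1 : σ →₀ ℕ) j).choose (k j)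
      = ∏ j ∈ k.support, (d j).choose (k j)
        + if k i = 0 then 0 else ∏ j ∈ (k - Finsupp.single i 1).support,
            (d j).choose ((k - Finsupp.single i 1 : σ →₀ ℕ) j) := by
  have hoff : ∀ j ∈ k.support.erase i,
      ((d + Finsupp.single i 1 : σ →₀ ℕ) j).choose (k j) = (d j).choose (k j) := fun j hj => by
    simp [Finset.ne_of_mem_erase hj]
  split_ifs with hki
  · refine Finset.prod_congr rfl fun j hj => hoff j (Finset.mem_erase.mpr ⟨?_, hj⟩)
    rintro rfl
    exact Finsupp.mem_support_iff.mp hj hki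
  · have hi : i ∈ k.support := Finsupp.mem_support_iff.mpr hki
    have hsub : (k - Finsupp.single i 1).support ⊆ k.support := fun j hj => by
      simp only [Finsupp.mem_support_iff, Finsupp.tsub_apply] at hj ⊢
      omega
    have hlower : ∏ j ∈ (k - Finsupp.single i 1).support,
          (d j).choose ((k - Finsupp.single i 1 : σ →₀ ℕ) j)
        = (d i).choose (k i - 1) * ∏ j ∈ k.support.erase i, (d j).choose (k j) := by
      rw [Finset.prod_subset hsub fun j _ hj => by
          rw [Finsupp.notMem_support_iff.mp hj, Nat.choose_zero_right],
        ← Finset.mul_prod_erase _ _ hi]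
      refine congrArg₂ _ (by simp) (Finset.prod_congr rfl fun j hj => ?_)
      simp [Finset.ne_of_mem_erase hj]
    rw [hlower, ← Finset.mul_prod_erase _ _ hi, ← Finset.mul_prod_erase _ _ hi,
      Finset.prod_congr rfl hoff, Finsupp.add_apply, Finsupp.single_eq_same,
      Nat.choose_succ_left _ _ (Nat.pos_of_ne_zero hki), add_mul, add_comm]

lemma mvHasseDeriv_mul_X (k : σ →₀ ℕ) (p : MvPolynomial σ K) (i : σ) :
    mvHasseDeriv k (p * X i) =
      mvHasseDeriv k p * X i + if k i = 0 then 0 else mvHasseDeriv (k - Finsupp.single i 1) p := by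
  rw [mvHasseDeriv, support_mul_X, Finset.sum_map]
  simp only [addRightEmbedding_apply]
  rw [Finset.sum_congr rfl fun e _ => by
      rw [coeff_mul_X, prod_choose_add_single, add_smul, map_add], Finset.sum_add_distrib]
  congr 1
  · rw [mvHasseDeriv, Finset.sum_mul]
    refine Finset.sum_congr rfl fun e _ => ?_
    by_cases hN : ∏ j ∈ k.support, (e j).choose (k j) = 0
    · simp [hN]
    rw [X, monomial_mul, mul_one,
      tsub_add_eq_add_tsub (le_of_prod_choose_ne_zero hN)]
  · split_ifs with hki
    · simp
    refine Finset.sum_congr rfl fun e _ => ?_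
    suffices (e + Finsupp.single i 1) - k = e - (k - Finsupp.single i 1) by rw [this]
    ext j
    simp only [Finsupp.tsub_apply, Finsupp.add_apply, Finsupp.single_apply]
    split_ifs with hij
    · subst hij; omega
    · omega

lemma eval_mvHasseDeriv (a : σ → K) (F : MvPolynomial σ K) (k : σ →₀ ℕ) :
    eval a (mvHasseDeriv k F) = coeff k (aeval (fun i => X i + C (a i)) F) := by
  induction F using MvPolynomial.induction_on generalizing k with
  | C r =>
    rw [mvHasseDeriv_C, aeval_C, algebraMap_eq, coeff_C]
    split_ifs <;> simp_all [eq_comm]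
  | add p q hp hq => rw [mvHasseDeriv_add, map_add, map_add, coeff_add, hp, hq]
  | mul_X p i hp =>
    rw [mvHasseDeriv_mul_X, map_mul, aeval_X, mul_add, coeff_add, coeff_mul_X',
      mul_comm _ (C (a i)), coeff_C_mul, map_add, map_mul, eval_X, hp]
    by_cases hki : k i = 0
    · simp [hki, mul_comm]
    · simp [hki, hp, mul_comm, add_comm]

end HasseDeriv

lemma homogeneousComponent_aeval_of_isHomogeneous_one {σ τ R S : Type*} [CommSemiring R]
    [CommSemiring S] [Algebra R S] {L : σ → MvPolynomial τ S} (hL : ∀ i, (L i).IsHomogeneous 1)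
    (n : ℕ) (G : MvPolynomial σ R) :
    homogeneousComponent n (aeval L G) = aeval L (homogeneousComponent n G) := by
  induction G using MvPolynomial.induction_on' with
  | monomial d c =>
    have hd : (aeval L (monomial d c)).IsHomogeneous (1 * d.degree) :=
      (isHomogeneous_monomial c rfl).aeval L hL
    rw [one_mul] at hd
    rw [homogeneousComponent_of_mem hd, homogeneousComponent_of_mem (isHomogeneous_monomial c rfl)]
    split_ifs <;> simp
  | add p q hp hq => simp only [map_add, hp, hq]

lemma multGE_iff_homogeneousComponent_eq_zero {σ K : Type*} [CommRing K] [DecidableEq σ]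
    (F : MvPolynomial σ K) (a : σ → K) (M : ℕ) :
    multGE F a M ↔ ∀ n < M, homogeneousComponent n (aeval (fun i => X i + C (a i)) F) = 0 := by
  simp only [multGE, eval_mvHasseDeriv]
  constructor
  · intro h n hn
    ext d
    rw [coeff_homogeneousComponent, coeff_zero]
    split_ifs with hd
    exacts [h d (hd.trans_lt hn), rfl]
  · intro h k hk
    simpa [coeff_homogeneousComponent] using congrArg (coeff k) (h k.degree hk)

lemma aeval_X_add_C_aeval_affine {σ τ K : Type*} [CommRing K] [Fintype τ]
    (F : MvPolynomial σ K) (b : τ → σ → K) (c : σ → K) (t : τ → K) :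
    aeval (fun j => X j + C (t j)) (aeval (fun i => (∑ j, C (b j i) * X j) + C (c i)) F)
      = aeval (fun i => ∑ j, C (b j i) * X j)
          (aeval (fun i => X i + C ((∑ j, t j * b j i) + c i)) F) := by
  rw [comp_aeval_apply, comp_aeval_apply]
  congr 2
  funext i
  simp only [map_add, map_sum, map_mul, aeval_X, aeval_C, algebraMap_eq, mul_add,
    Finset.sum_add_distrib, mul_comm (t _)]
  ring

/-- for `F ∈ F[X_1,…,X_m]`, vectors `b_1,…,b_{m−1}, c ∈ F^m` and
`F*(T_1,…,T_{m−1}) = F(T_1 b_1 + ⋯ + T_{m−1} b_{m−1} + c)`, one has, for every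
`t ∈ F^{m−1}`, `mult(F*, t) ≥ mult(F, t_1 b_1 + ⋯ + t_{m−1} b_{m−1} + c)`. -/
theorem multGE_restrict_line {m : ℕ} {K : Type*} [Field K]
    (F : MvPolynomial (Fin m) K) (b : Fin (m - 1) → Fin m → K) (c : Fin m → K)
    (t : Fin (m - 1) → K) (M : ℕ)
    (h : multGE F (fun i => (∑ j, t j * b j i) + c i) M) :
    multGE (MvPolynomial.aeval
        (fun i => (∑ j, MvPolynomial.C (b j i) * MvPolynomial.X j)
          + MvPolynomial.C (c i)) F) t M := by
  rw [multGE_iff_homogeneousComponent_eq_zero] at h ⊢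
  intro n hn
  have hlinear : ∀ i, (∑ j, C (b j i) * X j : MvPolynomial (Fin (m - 1)) K).IsHomogeneous 1 :=
    fun i => IsHomogeneous.sum _ _ _ fun j _ => isHomogeneous_C_mul_X (b j i) j
  rw [aeval_X_add_C_aeval_affine, homogeneousComponent_aeval_of_isHomogeneous_one hlinear, h n hn,
    map_zero]
end
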